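/- If (A,B) is a periodic Golay pair of length v, then the values PSD(A, v/2) and PSD(B, v/2) are perfect integer squares that sum to 2v, i.e., writing PSD(A,v/2) = p² and PSD(B,v/2) = q² with integers p, q ≥ 0, we have p² + q² = 2v. -/

import Mathlib

open Finset

/-- Periodic autocorrelation function of an integer sequence of length `v`. -/
def PAF (v : ℕ) (A : ℕ → ℤ) (s : ℕ) : ℤ :=
  ∑ k ∈ range v, A k * A ((k + s) % v)

/-- Discrete Fourier transform of an integer sequence of length `v`. -/
noncomputable def DFT (v : ℕ) (A : ℕ → ℤ) (s : ℕ) : ℂ :=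
  ∑ k ∈ range v, (A k : ℂ) * Complex.exp (2 * Real.pi * Complex.I * k * s / v)

/-- Power spectral density. -/
noncomputable def PSD (v : ℕ) (A : ℕ → ℤ) (s : ℕ) : ℝ :=
  Complex.normSq (DFT v A s)

lemma neg_one_pow_mod (v : ℕ) (hveven : Even v) (n : ℕ) :
    ((-1 : ℤ)) ^ (n % v) = (-1 : ℤ) ^ n := by
  conv_rhs => rw [← Nat.mod_add_div n v]
  rw [pow_add, pow_mul, hveven.neg_one_pow, one_pow, mul_one]

lemma sq_alt (v : ℕ) (hv : 0 < v) (hveven : Even v) (A : ℕ → ℤ) :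
    (∑ k ∈ range v, A k * (-1) ^ k) ^ 2 = ∑ s ∈ range v, (-1) ^ s * PAF v A s := by
  have key : ∀ k s : ℕ,
      (-1 : ℤ) ^ s * (A k * A ((k + s) % v))
        = (A k * (-1) ^ k) * (A ((k + s) % v) * (-1) ^ ((k + s) % v)) := by
    intro k s
    rw [neg_one_pow_mod v hveven, pow_add]
    ring_nf
    rw [mul_comm k 2, pow_mul, neg_one_sq, one_pow, mul_one]
  rw [sq, Finset.sum_mul_sum]
  unfold PAF
  simp_rw [Finset.mul_sum]
  rw [← Finset.sum_product', ← Finset.sum_product']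
  refine (Finset.sum_nbij' (i := fun p : ℕ × ℕ => (p.2, (p.2 + p.1) % v))
    (j := fun q : ℕ × ℕ => ((q.2 + v - q.1) % v, q.1)) ?_ ?_ ?_ ?_ ?_).symm
  · rintro ⟨s, k⟩ hp
    simp only [mem_product, mem_range] at hp ⊢
    exact ⟨hp.2, Nat.mod_lt _ hv⟩
  · rintro ⟨j, k⟩ hp
    simp only [mem_product, mem_range] at hp ⊢
    exact ⟨Nat.mod_lt _ hv, hp.1⟩
  · rintro ⟨s, k⟩ hp
    simp only [mem_product, mem_range] at hp
    have h2 : (k + s) % v + v - k = (k + s) % v + (v - k) := by omega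
    have h3 : ((k + s) % v + v - k) % v = s := by
      rw [h2, Nat.mod_add_mod]
      have h4 : k + s + (v - k) = s + v := by omega
      rw [h4, Nat.add_mod_right, Nat.mod_eq_of_lt hp.1]
    simp [h3]
  · rintro ⟨j, k⟩ hp
    simp only [mem_product, mem_range] at hp
    have h3 : (j + (k + v - j) % v) % v = k := by
      rw [Nat.add_mod_mod]
      have h4 : j + (k + v - j) = k + v := by omega
      rw [h4, Nat.add_mod_right, Nat.mod_eq_of_lt hp.2]
    simp [h3]
  · rintro ⟨s, k⟩ hp
    exact key k s

lemma dft_half (v : ℕ) (hv : 0 < v) (hveven : Even v) (A : ℕ → ℤ) :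
    DFT v A (v / 2) = ((∑ k ∈ range v, A k * (-1) ^ k : ℤ) : ℂ) := by
  unfold DFT
  push_cast
  refine Finset.sum_congr rfl fun k _ => ?_
  congr 1
  have hvC : (v : ℂ) ≠ 0 := Nat.cast_ne_zero.mpr hv.ne'
  have h2 : ((v / 2 : ℕ) : ℂ) * 2 = (v : ℂ) := by
    exact_mod_cast congrArg (Nat.cast (R := ℂ)) (Nat.div_mul_cancel hveven.two_dvd)
  have harg : 2 * (Real.pi : ℂ) * Complex.I * k * (v / 2 : ℕ) / v
      = k * (Real.pi * Complex.I) := by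
    field_simp
    linear_combination (k : ℂ) * h2
  rw [harg, Complex.exp_nat_mul, Complex.exp_pi_mul_I]

lemma paf_zero (v : ℕ) (A : ℕ → ℤ) (hA : ∀ i < v, A i = 1 ∨ A i = -1) :
    PAF v A 0 = v := by
  unfold PAF
  rw [Finset.sum_congr rfl (fun k hk => ?_), Finset.sum_const, nsmul_eq_mul, mul_one,
    Finset.card_range]
  rw [mem_range] at hk
  rw [Nat.add_zero, Nat.mod_eq_of_lt hk]
  rcases hA k hk with h | h <;> rw [h] <;> ring

/-- If `(A, B)` is a periodic Golay pair of length `v`, then `PSD(A, v/2)` and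
`PSD(B, v/2)` are perfect integer squares `p²`, `q²` with `p² + q² = 2v`. -/
theorem psd_half_sum_of_squares (v : ℕ) (hv : 0 < v) (hveven : Even v)
    (A B : ℕ → ℤ)
    (hA : ∀ i < v, A i = 1 ∨ A i = -1) (hB : ∀ i < v, B i = 1 ∨ B i = -1)
    (hPAF : ∀ s, 1 ≤ s → s < v → PAF v A s + PAF v B s = 0) :
    ∃ p q : ℕ, PSD v A (v / 2) = (p : ℝ) ^ 2 ∧ PSD v B (v / 2) = (q : ℝ) ^ 2 ∧
      p ^ 2 + q ^ 2 = 2 * v := by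
  set SA : ℤ := ∑ k ∈ range v, A k * (-1) ^ k with hSA
  set SB : ℤ := ∑ k ∈ range v, B k * (-1) ^ k with hSB
  have hsum : SA ^ 2 + SB ^ 2 = 2 * v := by
    rw [hSA, hSB, sq_alt v hv hveven A, sq_alt v hv hveven B, ← Finset.sum_add_distrib]
    have hterm : ∀ s ∈ range v, ((-1 : ℤ) ^ s * PAF v A s + (-1) ^ s * PAF v B s)
        = if s = 0 then (2 * v : ℤ) else 0 := by
      intro s hs
      rw [mem_range] at hs
      rcases Nat.eq_zero_or_pos s with rfl | hs1
      · simp [paf_zero v A hA, paf_zero v B hB]; ring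
      · rw [if_neg hs1.ne', ← mul_add, hPAF s hs1 hs, mul_zero]
    rw [Finset.sum_congr rfl hterm, Finset.sum_ite_eq' (range v) 0 (fun _ => (2 * v : ℤ)),
      if_pos (mem_range.mpr hv)]
  have hpsd : ∀ (C : ℕ → ℤ), PSD v C (v / 2)
      = ((((∑ k ∈ range v, C k * (-1) ^ k : ℤ).natAbs : ℕ) : ℝ)) ^ 2 := by
    intro C
    unfold PSD
    rw [dft_half v hv hveven C, Complex.normSq_intCast]
    push_cast [Nat.cast_natAbs]
    rw [sq_abs]
    ring
  refine ⟨SA.natAbs, SB.natAbs, hpsd A, hpsd B, ?_⟩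
  have : ((SA.natAbs ^ 2 + SB.natAbs ^ 2 : ℕ) : ℤ) = ((2 * v : ℕ) : ℤ) := by
    push_cast
    rw [sq_abs, sq_abs]
    exact_mod_cast hsum
  exact_mod_cast this
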